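/- arXiv:1405.1189 — 3 statements merged into one kernel-verified Lean document; each statement's English description precedes it below -/
import Mathlib

section
/- Let S ⊆ ℤ^d be a set closed under taking midpoints of pairs of its elements that agree modulo 2 in every coordinate. Let λ : S → ℕ be a finitely supported function with |supp(λ)| > 2^d. Then there exists a finitely supported μ : S → ℕ with Σ_{z∈S} μ(z) = Σ_{z∈S} λ(z), Σ_{z∈S} μ(z)·z = Σ_{z∈S} λ(z)·z, and Σ_{z∈S} μ(z)·‖z‖² < Σ_{z∈S} λ(z)·‖z‖². -/
/-!
Among more than `2^d` support points two, `y'` and `y''`, lie in the same class of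
`ℤ^d / 2ℤ^d`, so their midpoint `y` is integral and lies in `S`. Replacing one copy each of
`y'` and `y''` by two copies of `y` keeps the count and the vector sum, and by the
parallelogram law `‖y'‖² + ‖y''‖² = 2‖y‖² + ‖y' - y''‖² / 2` it lowers the total squared norm.
-/

open Finsupp

theorem exists_ne_emod_two_eq_of_two_pow_card_lt {ι : Type*} [Fintype ι] {s : Finset (ι → ℤ)}
    (hs : 2 ^ Fintype.card ι < s.card) :
    ∃ x ∈ s, ∃ y ∈ s, x ≠ y ∧ ∀ j, x j % 2 = y j % 2 := by
  classical
  have hcard : (Finset.univ : Finset (ι → ZMod 2)).card < s.card := by simpa using hs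
  obtain ⟨x, hx, y, hy, hne, hxy⟩ := Finset.exists_ne_map_eq_of_card_lt_of_maps_to hcard
    (fun z _ => Finset.mem_univ (fun j => (z j : ZMod 2)))
  exact ⟨x, hx, y, hy, hne, fun j => (ZMod.intCast_eq_intCast_iff' _ _ 2).mp (congrFun hxy j)⟩

theorem exists_two_mul_eq_add_of_emod_two_eq {ι : Type*} {x y : ι → ℤ}
    (hxy : ∀ j, x j % 2 = y j % 2) : ∃ z : ι → ℤ, ∀ j, 2 * z j = x j + y j :=
  ⟨fun j => (x j + y j) / 2, fun j => Int.mul_ediv_cancel' (by have := hxy j; omega)⟩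

theorem four_mul_sq_add_sub_sq_of_two_mul_eq_add {R : Type*} [CommRing R] {a b c : R}
    (h : 2 * c = a + b) : 4 * c ^ 2 + (a - b) ^ 2 = 2 * (a ^ 2 + b ^ 2) := by
  linear_combination (2 * c + a + b) * h

theorem two_mul_sum_sq_lt_of_two_mul_eq_add {R ι : Type*} [CommRing R] [LinearOrder R]
    [IsStrictOrderedRing R] [Fintype ι] {x y z : ι → R} (hxy : x ≠ y)
    (hz : ∀ j, 2 * z j = x j + y j) :
    2 * ∑ j, z j ^ 2 < ∑ j, x j ^ 2 + ∑ j, y j ^ 2 := by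
  obtain ⟨j₀, hj₀⟩ := Function.ne_iff.mp hxy
  have hpos : 0 < ∑ j, (x j - y j) ^ 2 :=
    Finset.sum_pos' (fun j _ => sq_nonneg _)
      ⟨j₀, Finset.mem_univ _, sq_pos_of_ne_zero (sub_ne_zero.mpr hj₀)⟩
  have hsum :
      4 * ∑ j, z j ^ 2 + ∑ j, (x j - y j) ^ 2 = 2 * (∑ j, x j ^ 2 + ∑ j, y j ^ 2) := by
    simp only [Finset.mul_sum, ← Finset.sum_add_distrib,
      four_mul_sq_add_sub_sq_of_two_mul_eq_add (hz _)]
  linarith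

namespace Finsupp

variable {α M : Type*} [AddCommMonoid M]

theorem sum_add_single {h : α → ℕ → M} (h_zero : ∀ a, h a 0 = 0)
    (h_add : ∀ a m n, h a (m + n) = h a m + h a n) (f : α →₀ ℕ) (a : α) (n : ℕ) :
    (f + single a n).sum h = f.sum h + h a n := by
  rw [sum_add_index' h_zero h_add, sum_single_index (h_zero a)]

theorem single_one_add_single_one_le {f : α →₀ ℕ} {a b : α} (hab : a ≠ b)
    (ha : a ∈ f.support) (hb : b ∈ f.support) : single a 1 + single b 1 ≤ f := by
  rw [mem_support_iff] at ha hb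
  classical
  intro c
  simp only [coe_add, Pi.add_apply, single_apply]
  split_ifs <;> subst_vars <;> first | omega | exact absurd rfl hab

end Finsupp

/-- Support-reduction step: if a midpoint-closed set `S ⊆ ℤ^d` carries a
finitely supported multiplicity function `λ` with more than `2^d` support
points, then merging two same-parity support points into their midpoint gives
`μ` with the same total count and vector sum but strictly smaller total
squared norm. -/
theorem support_reduction_step (d : ℕ) (S : Set (Fin d → ℤ))
    (hmid : ∀ y' ∈ S, ∀ y'' ∈ S, (∀ j, y' j % 2 = y'' j % 2) →
      ∀ y : Fin d → ℤ, (∀ j, 2 * y j = y' j + y'' j) → y ∈ S)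
    (lam : (Fin d → ℤ) →₀ ℕ) (hsupp : ↑lam.support ⊆ S)
    (hcard : 2 ^ d < lam.support.card) :
    ∃ mu : (Fin d → ℤ) →₀ ℕ, ↑mu.support ⊆ S ∧
      mu.sum (fun _ m => m) = lam.sum (fun _ m => m) ∧
      mu.sum (fun z m => (m : ℤ) • z) = lam.sum (fun z m => (m : ℤ) • z) ∧
      mu.sum (fun z m => (m : ℤ) * ∑ j, (z j) ^ 2)
        < lam.sum (fun z m => (m : ℤ) * ∑ j, (z j) ^ 2) := by
  obtain ⟨y', hy', y'', hy'', hne, hpar⟩ :=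
    exists_ne_emod_two_eq_of_two_pow_card_lt (s := lam.support) (by simpa using hcard)
  obtain ⟨y, hy⟩ := exists_two_mul_eq_add_of_emod_two_eq hpar
  have hyS : y ∈ S := hmid y' (hsupp hy') y'' (hsupp hy'') hpar y hy
  obtain ⟨nu, rfl⟩ := le_iff_exists_add'.mp (single_one_add_single_one_le hne hy' hy'')
  rw [← add_assoc] at hsupp ⊢
  refine ⟨nu + single y 2, ?_, ?_, ?_, ?_⟩
  · intro z hz
    rcases Finset.mem_union.mp (support_add hz) with hz | hz
    · exact hsupp (support_mono (le_self_add.trans le_self_add) hz)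
    · rwa [Finset.mem_singleton.mp (support_single_subset hz)]
  · simp only [sum_add_single (h := fun (_ : Fin d → ℤ) (m : ℕ) => m) (fun _ => rfl)
      (fun _ _ _ => rfl)]
  · simp only [sum_add_single (h := fun (z : Fin d → ℤ) (m : ℕ) => (m : ℤ) • z)
      (fun _ => zero_smul _ _) (fun _ _ _ => by push_cast; exact add_smul _ _ _),
      Nat.cast_one, Nat.cast_ofNat, one_smul]
    rw [add_assoc]
    congr 1
    funext j
    simp only [Pi.add_apply, Pi.smul_apply, smul_eq_mul]
    linarith [hy j]
  · simp only [
      sum_add_single (h := fun (z : Fin d → ℤ) (m : ℕ) => (m : ℤ) * ∑ j, z j ^ 2)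
      (fun _ => zero_mul _) (fun _ _ _ => by push_cast; exact add_mul _ _ _), Nat.cast_one,
      Nat.cast_ofNat, one_mul]
    linarith [two_mul_sum_sq_lt_of_two_mul_eq_add hne hy]
end

section
/- Let S ⊆ ℤ^d be a finite set closed under taking midpoints of pairs of its elements that agree modulo 2 in every coordinate. For every finitely supported λ : S → ℕ there exists a finitely supported μ : S → ℕ with |supp(μ)| ≤ 2^d, Σ_{z} μ(z) = Σ_{z} λ(z), and Σ_{z} μ(z)·z = Σ_{z} λ(z)·z. -/
/-!
Two points of `supp λ` with the same parity vector have their midpoint in `S`; replacing one copy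
of each by two copies of the midpoint keeps the total count and the vector sum, and strictly
decreases the energy `Σ λ(z) ‖z‖²` by the parallelogram law. By pigeonhole on the `2^d` parity
vectors such a pair exists as long as `|supp λ| > 2^d`, so iterating terminates at a sparse `μ`.
-/

open Finsupp

namespace Finsupp

variable {α : Type*}

theorem exists_eq_add_single_one_of_mem_support {f : α →₀ ℕ} {a : α} (ha : a ∈ f.support) :
    ∃ g, f = g + single a 1 :=
  le_iff_exists_add'.mp (single_le_iff.mpr (Nat.one_le_iff_ne_zero.mpr (mem_support_iff.mp ha)))

theorem exists_eq_add_single_one_add_single_one {f : α →₀ ℕ} {a b : α} (hab : a ≠ b)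
    (ha : a ∈ f.support) (hb : b ∈ f.support) :
    ∃ g, f = g + single a 1 + single b 1 := by
  obtain ⟨g, rfl⟩ := exists_eq_add_single_one_of_mem_support ha
  have hb' : b ∈ g.support := by
    simpa [single_apply, hab] using hb
  obtain ⟨h, rfl⟩ := exists_eq_add_single_one_of_mem_support hb'
  exact ⟨h, add_right_comm _ _ _⟩

end Finsupp

variable {ι : Type*} [Fintype ι]

def IntMidpointClosed (S : Set (ι → ℤ)) : Prop :=
  ∀ y' ∈ S, ∀ y'' ∈ S, (∀ j, y' j % 2 = y'' j % 2) →
    ∀ y : ι → ℤ, (∀ j, 2 * y j = y' j + y'' j) → y ∈ S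

def sqNorm (z : ι → ℤ) : ℕ := ∑ j, (z j).natAbs ^ 2

def energy (f : (ι → ℤ) →₀ ℕ) : ℕ := f.sum fun z m => m * sqNorm z

theorem two_mul_sqNorm_lt_of_midpoint {a b c : ι → ℤ} (hab : a ≠ b)
    (hc : ∀ j, 2 * c j = a j + b j) : 2 * sqNorm c < sqNorm a + sqNorm b := by
  obtain ⟨k, hk⟩ := Function.ne_iff.mp hab
  have hpar : ∀ j, 2 * (2 * c j ^ 2) + (a j - b j) ^ 2 = 2 * (a j ^ 2 + b j ^ 2) := fun j => by
    linear_combination (2 * c j + a j + b j) * hc j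
  have hle : ∀ j ∈ Finset.univ, 2 * c j ^ 2 ≤ a j ^ 2 + b j ^ 2 := fun j _ => by
    nlinarith [hpar j, sq_nonneg (a j - b j)]
  have hlt : 2 * c k ^ 2 < a k ^ 2 + b k ^ 2 := by
    nlinarith [hpar k, sq_pos_of_ne_zero (sub_ne_zero.mpr hk)]
  zify
  simp only [sqNorm, Nat.cast_sum, Nat.cast_pow, Int.natAbs_sq, Finset.mul_sum,
    ← Finset.sum_add_distrib]
  exact Finset.sum_lt_sum hle ⟨k, Finset.mem_univ k, hlt⟩

theorem exists_ne_emod_two_eq_of_two_pow_lt_card {s : Finset (ι → ℤ)}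
    (hs : 2 ^ Fintype.card ι < s.card) :
    ∃ a ∈ s, ∃ b ∈ s, a ≠ b ∧ ∀ j, a j % 2 = b j % 2 := by
  classical
  have hparity : Set.MapsTo (fun (z : ι → ℤ) j => z j % 2) s
      (Fintype.piFinset fun _ : ι => ({0, 1} : Finset ℤ) : Set (ι → ℤ)) := fun z _ => by
    simpa [Fintype.mem_piFinset] using fun j => Int.emod_two_eq (z j)
  obtain ⟨a, ha, b, hb, hab, heq⟩ :=
    Finset.exists_ne_map_eq_of_card_lt_of_maps_to (by simpa using hs) hparity
  exact ⟨a, ha, b, hb, hab, congrFun heq⟩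

theorem exists_merge_midpoint {f : (ι → ℤ) →₀ ℕ} {a b c : ι → ℤ} (hab : a ≠ b)
    (ha : a ∈ f.support) (hb : b ∈ f.support) (hc : ∀ j, 2 * c j = a j + b j) :
    ∃ g : (ι → ℤ) →₀ ℕ, g.support ⊆ insert c f.support ∧
      g.sum (fun _ m => m) = f.sum (fun _ m => m) ∧
      g.sum (fun z m => (m : ℤ) • z) = f.sum (fun z m => (m : ℤ) • z) ∧
      energy g < energy f := by
  obtain ⟨h, rfl⟩ := exists_eq_add_single_one_add_single_one hab ha hb
  refine ⟨h + single c 2, ?_, ?_, ?_, ?_⟩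
  · refine support_add.trans (Finset.union_subset ?_ ?_)
    · exact (support_mono (by rw [add_assoc]; exact le_self_add)).trans (Finset.subset_insert _ _)
    · exact support_single_subset.trans (by simp)
  · simp [sum_add_index', add_assoc]
  · have hc' : (2 : ℤ) • c = a + b := funext fun j => by simp [hc]
    simp only [sum_add_index', Nat.cast_zero, zero_smul, Nat.cast_add, add_smul, implies_true,
      sum_single_index]
    rw [Nat.cast_ofNat, hc', Nat.cast_one, one_smul, one_smul, add_assoc]
  · have hsq := two_mul_sqNorm_lt_of_midpoint hab hc
    simp only [energy, sum_add_index', zero_mul, add_mul, implies_true, sum_single_index]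
    omega

theorem exists_energy_lt_of_two_pow_lt_card {S : Set (ι → ℤ)} (hS : IntMidpointClosed S)
    {f : (ι → ℤ) →₀ ℕ} (hf : ↑f.support ⊆ S) (hcard : 2 ^ Fintype.card ι < f.support.card) :
    ∃ g : (ι → ℤ) →₀ ℕ, ↑g.support ⊆ S ∧
      g.sum (fun _ m => m) = f.sum (fun _ m => m) ∧
      g.sum (fun z m => (m : ℤ) • z) = f.sum (fun z m => (m : ℤ) • z) ∧
      energy g < energy f := by
  obtain ⟨a, ha, b, hb, hab, hparity⟩ := exists_ne_emod_two_eq_of_two_pow_lt_card hcard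
  have hc : ∀ j, 2 * ((a j + b j) / 2) = a j + b j := fun j => by have := hparity j; omega
  have hcS := hS a (hf ha) b (hf hb) hparity _ hc
  obtain ⟨g, hgsupp, hg⟩ := exists_merge_midpoint hab ha hb hc
  refine ⟨g, fun z hz => ?_, hg⟩
  rcases Finset.mem_insert.mp (hgsupp hz) with rfl | hz
  exacts [hcS, hf hz]

theorem sparse_representation_general (d : ℕ) (S : Set (Fin d → ℤ))
    (hmid : ∀ y' ∈ S, ∀ y'' ∈ S, (∀ j, y' j % 2 = y'' j % 2) →
      ∀ y : Fin d → ℤ, (∀ j, 2 * y j = y' j + y'' j) → y ∈ S)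
    (lam : (Fin d → ℤ) →₀ ℕ) (hsupp : ↑lam.support ⊆ S) :
    ∃ mu : (Fin d → ℤ) →₀ ℕ, ↑mu.support ⊆ S ∧
      mu.support.card ≤ 2 ^ d ∧
      mu.sum (fun _ m => m) = lam.sum (fun _ m => m) ∧
      mu.sum (fun z m => (m : ℤ) • z) = lam.sum (fun z m => (m : ℤ) • z) := by
  induction h : energy lam using Nat.strong_induction_on generalizing lam with
  | _ n ih =>
  by_cases hcard : lam.support.card ≤ 2 ^ d
  · exact ⟨lam, hsupp, hcard, rfl, rfl⟩
  obtain ⟨g, hgS, hcount, hsum, hlt⟩ :=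
    exists_energy_lt_of_two_pow_lt_card hmid hsupp (by simpa using not_le.mp hcard)
  obtain ⟨mu, hmuS, hmucard, hmucount, hmusum⟩ := ih _ (h ▸ hlt) g hgS rfl
  exact ⟨mu, hmuS, hmucard, hmucount.trans hcount, hmusum.trans hsum⟩

/-- Eisenbrand–Shmonin sparse representation: over a finite midpoint-closed
set `S ⊆ ℤ^d`, every multiplicity function `λ` can be replaced by one with
support of size at most `2^d` having the same total count and vector sum. -/
theorem sparse_representation (d : ℕ) (S : Set (Fin d → ℤ)) (hfin : S.Finite)
    (hmid : ∀ y' ∈ S, ∀ y'' ∈ S, (∀ j, y' j % 2 = y'' j % 2) →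
      ∀ y : Fin d → ℤ, (∀ j, 2 * y j = y' j + y'' j) → y ∈ S)
    (lam : (Fin d → ℤ) →₀ ℕ) (hsupp : ↑lam.support ⊆ S) :
    ∃ mu : (Fin d → ℤ) →₀ ℕ, ↑mu.support ⊆ S ∧
      mu.support.card ≤ 2 ^ d ∧
      mu.sum (fun _ m => m) = lam.sum (fun _ m => m) ∧
      mu.sum (fun z m => (m : ℤ) • z) = lam.sum (fun z m => (m : ℤ) • z) :=
  sparse_representation_general d S hmid lam hsupp
end

section
/- Let the huge threeway table problem with line-sums g ∈ ℤ₊^{l×m}, and for k = 1,…,t column-sums e^k ∈ ℤ₊^m, row-sums f^k ∈ ℤ₊^l, and multiplicities n_k with Σ n_k = n, be feasible. Then it has a solution x = (x¹,…,xⁿ) in which the number of distinct l×m matrices occurring among the bricks of type k is at most 2^{lm}, for each k = 1,…,t. -/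
/-!
Two distinct layers of the same type whose entries agree modulo 2 may both be replaced by
their midpoint. The admissible layers of a type form a midpoint-closed set, so this keeps every
layer admissible; it keeps all line sums, and it strictly lowers the total sum of squared
entries. Repeating this terminates, and at the end the layers of each type have pairwise
distinct parity patterns in `(ℤ/2)^{l×m}`, so there are at most `2^{lm}` of them.
-/

open Finset Function

def MidpointClosed {M : Type*} [Add M] (S : Set M) : Prop :=
  ∀ ⦃y z h : M⦄, y ∈ S → z ∈ S → y + z = h + h → h ∈ S

section

variable {α : Type*} [Fintype α]

theorem exists_ne_add_eq_add_self_of_card_lt [DecidableEq α] {s : Finset (α → ℤ)}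
    (hs : 2 ^ Fintype.card α < #s) : ∃ y ∈ s, ∃ z ∈ s, y ≠ z ∧ ∃ h, y + z = h + h := by
  have hcard : #(univ : Finset (α → Bool)) < #s := by simpa using hs
  obtain ⟨y, hy, z, hz, hyz, hpar⟩ := exists_ne_map_eq_of_card_lt_of_maps_to hcard
    (f := fun v p => decide (Even (v p))) fun _ _ => mem_univ _
  refine ⟨y, hy, z, hz, hyz, ?_⟩
  have heven : ∀ p, Even (y p + z p) := fun p => by
    simpa [Int.even_add] using congrFun hpar p
  choose h hh using heven
  exact ⟨h, funext hh⟩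

theorem two_mul_dotProduct_self_lt {y z h : α → ℤ} (hyzh : y + z = h + h) (hyz : y ≠ z) :
    2 * (h ⬝ᵥ h) < y ⬝ᵥ y + z ⬝ᵥ z := by
  simp only [dotProduct, mul_sum, ← sum_add_distrib]
  have hp : ∀ p, y p + z p = h p + h p := congrFun hyzh
  obtain ⟨p, hp'⟩ := Function.ne_iff.mp hyz
  have parallelogram : ∀ q, 2 * (y q * y q + z q * z q) = 4 * (h q * h q) + (y q - z q) ^ 2 :=
    fun q => by rw [eq_sub_of_add_eq (hp q)]; ring
  refine sum_lt_sum (fun q _ => by linarith [parallelogram q, sq_nonneg (y q - z q)])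
    ⟨p, mem_univ p, ?_⟩
  linarith [parallelogram p, sq_pos_of_ne_zero (sub_ne_zero.mpr hp')]

end

theorem sum_comp_update_update {ι N M : Type*} [Fintype ι] [DecidableEq ι] [AddCommGroup M]
    (φ : N → M) (x : ι → N) {i j : ι} (hij : i ≠ j) (a b : N) :
    ∑ k, φ (update (update x i a) j b k) = ∑ k, φ (x k) - φ (x i) - φ (x j) + φ a + φ b := by
  simp only [← comp_apply (f := φ), comp_update]
  rw [sum_update_of_mem (mem_univ j), sum_sdiff_eq_sub (subset_univ _), sum_singleton,
    sum_update_of_mem (mem_univ i), sum_sdiff_eq_sub (subset_univ _), sum_singleton]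
  simp only [comp_apply, update_of_ne hij.symm]
  abel

theorem sum_eq_of_add_eq_add_self {δ : Type*} (s : Finset δ) {y z h : δ → ℤ} {d : ℤ}
    (hp : ∀ q ∈ s, y q + z q = h q + h q) (hy : ∑ q ∈ s, y q = d) (hz : ∑ q ∈ s, z q = d) :
    ∑ q ∈ s, h q = d := by
  have := sum_congr rfl hp
  rw [sum_add_distrib, sum_add_distrib, hy, hz] at this
  omega

def transportTables {β γ : Type*} [Fintype β] [Fintype γ] (r : β → ℤ) (c : γ → ℤ) :
    Set (β × γ → ℤ) :=
  {y | 0 ≤ y ∧ (∀ a, ∑ b, y (a, b) = r a) ∧ ∀ b, ∑ a, y (a, b) = c b}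

theorem midpointClosed_transportTables {β γ : Type*} [Fintype β] [Fintype γ] (r : β → ℤ)
    (c : γ → ℤ) : MidpointClosed (transportTables r c) := by
  rintro y z h ⟨hy, hyr, hyc⟩ ⟨hz, hzr, hzc⟩ hyzh
  have hp : ∀ p, y p + z p = h p + h p := congrFun hyzh
  exact ⟨fun p => by linarith [hy p, hz p, hp p],
    fun a => sum_eq_of_add_eq_add_self univ (fun b _ => hp (a, b)) (hyr a) (hzr a),
    fun b => sum_eq_of_add_eq_add_self univ (fun a _ => hp (a, b)) (hyc b) (hzc b)⟩

section

variable {ι κ α : Type*} [Fintype ι] [DecidableEq ι] [DecidableEq κ] [Fintype α] [DecidableEq α]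
  {S : κ → Set (α → ℤ)} (τ : ι → κ)

theorem exists_sum_eq_dotProduct_lt (hS : ∀ k, MidpointClosed (S k)) {x : ι → α → ℤ}
    (hx : ∀ i, x i ∈ S (τ i)) {k : κ}
    (hk : 2 ^ Fintype.card α < #((univ.filter fun i => τ i = k).image x)) :
    ∃ x' : ι → α → ℤ, (∀ i, x' i ∈ S (τ i)) ∧ ∑ i, x' i = ∑ i, x i ∧
      ∑ i, x' i ⬝ᵥ x' i < ∑ i, x i ⬝ᵥ x i := by
  obtain ⟨y, hy, z, hz, hyz, h, hyzh⟩ := exists_ne_add_eq_add_self_of_card_lt hk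
  obtain ⟨i, hi, rfl⟩ := mem_image.mp hy
  obtain ⟨j, hj, rfl⟩ := mem_image.mp hz
  have hij : i ≠ j := fun hij => hyz (hij ▸ rfl)
  have hi : τ i = k := (mem_filter.mp hi).2
  have hj : τ j = k := (mem_filter.mp hj).2
  have hh : h ∈ S k := hS k (hi ▸ hx i) (hj ▸ hx j) hyzh
  refine ⟨update (update x i h) j h, fun i' => ?_, ?_, ?_⟩
  · simp only [update_apply]
    split_ifs with hi' hj'
    · exact hi' ▸ hj ▸ hh
    · exact hj' ▸ hi ▸ hh
    · exact hx i'
  · refine (sum_comp_update_update id x hij h h).trans ?_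
    dsimp only [id]
    rw [add_assoc, ← hyzh]
    abel
  · rw [sum_comp_update_update (fun v => v ⬝ᵥ v) x hij]
    linarith [two_mul_dotProduct_self_lt hyzh hyz]

theorem exists_sparse_of_midpointClosed (hS : ∀ k, MidpointClosed (S k)) {x : ι → α → ℤ}
    (hx : ∀ i, x i ∈ S (τ i)) :
    ∃ x' : ι → α → ℤ, (∀ i, x' i ∈ S (τ i)) ∧ ∑ i, x' i = ∑ i, x i ∧
      ∀ k, #((univ.filter fun i => τ i = k).image x') ≤ 2 ^ Fintype.card α := by
  induction hE : (∑ i, x i ⬝ᵥ x i).toNat using Nat.strong_induction_on generalizing x with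
  | _ N ih =>
  by_cases hsparse : ∀ k, #((univ.filter fun i => τ i = k).image x) ≤ 2 ^ Fintype.card α
  · exact ⟨x, hx, rfl, hsparse⟩
  push Not at hsparse
  obtain ⟨k, hk⟩ := hsparse
  obtain ⟨x', hx', hsum, hlt⟩ := exists_sum_eq_dotProduct_lt τ hS hx hk
  have hE' : (∑ i, x' i ⬝ᵥ x' i).toNat < N := by
    have : 0 ≤ ∑ i, x' i ⬝ᵥ x' i := sum_nonneg fun i _ => sum_nonneg fun p _ => mul_self_nonneg _
    omega
  obtain ⟨x'', hx'', hsum', hsparse⟩ := ih _ hE' hx' rfl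
  exact ⟨x'', hx'', hsum'.trans hsum, hsparse⟩

end

theorem huge_table_sparse_solution_general (l m t n : ℕ)
    (g : Fin l × Fin m → ℤ)
    (e : Fin t → Fin m → ℤ) (f : Fin t → Fin l → ℤ)
    (τ : Fin n → Fin t)
    (hfeas : ∃ x : Fin n → Fin l × Fin m → ℤ,
        (∀ i, 0 ≤ x i ∧ (∀ a, ∑ b, x i (a, b) = f (τ i) a) ∧
          (∀ b, ∑ a, x i (a, b) = e (τ i) b)) ∧
        (∀ p, ∑ i, x i p = g p)) :
    ∃ x : Fin n → Fin l × Fin m → ℤ,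
      ((∀ i, 0 ≤ x i ∧ (∀ a, ∑ b, x i (a, b) = f (τ i) a) ∧
          (∀ b, ∑ a, x i (a, b) = e (τ i) b)) ∧
        (∀ p, ∑ i, x i p = g p)) ∧
      ∀ k, ((Finset.univ.filter fun i => τ i = k).image x).card ≤ 2 ^ (l * m) := by
  obtain ⟨x, hx, hg⟩ := hfeas
  obtain ⟨x', hx', hsum, hsparse⟩ := exists_sparse_of_midpointClosed τ
    (S := fun k => transportTables (f k) (e k)) (fun k => midpointClosed_transportTables _ _) hx
  refine ⟨x', ⟨hx', fun p => ?_⟩, by simpa using hsparse⟩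
  rw [← hg p, ← Finset.sum_apply, hsum, Finset.sum_apply]

/-- If the huge threeway table problem (with line-sums `g`, and for each type
`k` row-sums `f^k`, column-sums `e^k` and multiplicity `n_k`) is feasible,
then it has a solution in which at most `2^{lm}` distinct `l×m` matrices occur
among the layers of each type. -/
theorem huge_table_sparse_solution (l m t n : ℕ)
    (g : Fin l × Fin m → ℤ) (hg : 0 ≤ g)
    (e : Fin t → Fin m → ℤ) (f : Fin t → Fin l → ℤ)
    (he : ∀ k, 0 ≤ e k) (hf : ∀ k, 0 ≤ f k)
    (nk : Fin t → ℕ) (hn : ∑ k, nk k = n)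
    (τ : Fin n → Fin t)
    (hτ : ∀ k, (Finset.univ.filter fun i => τ i = k).card = nk k)
    (hfeas : ∃ x : Fin n → Fin l × Fin m → ℤ,
        (∀ i, 0 ≤ x i ∧ (∀ a, ∑ b, x i (a, b) = f (τ i) a) ∧
          (∀ b, ∑ a, x i (a, b) = e (τ i) b)) ∧
        (∀ p, ∑ i, x i p = g p)) :
    ∃ x : Fin n → Fin l × Fin m → ℤ,
      ((∀ i, 0 ≤ x i ∧ (∀ a, ∑ b, x i (a, b) = f (τ i) a) ∧
          (∀ b, ∑ a, x i (a, b) = e (τ i) b)) ∧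
        (∀ p, ∑ i, x i p = g p)) ∧
      ∀ k, ((Finset.univ.filter fun i => τ i = k).image x).card ≤ 2 ^ (l * m) :=
  huge_table_sparse_solution_general l m t n g e f τ hfeas
end
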